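/- arXiv:1110.0767 — 3 statements merged into one kernel-verified Lean document; each statement's English description precedes it below -/
import Mathlib

section
/- Let I be a directed poset, (𝒦_i)_{i∈I} a directed family of full subcategories of a category 𝒦 with 𝒦 = ⋃_{i∈I} 𝒦_i, and κ a regular cardinal with κ > |I| such that each 𝒦_i is κ-accessible and each inclusion 𝒦_i ⊆ 𝒦_j (i ≤ j) is strongly κ-accessible. Then every κ-directed diagram (K_m)_{m∈M} in 𝒦 has a colimit in 𝒦; moreover this colimit is computed as the colimit in some 𝒦_{i₀} of the restriction of the diagram to a cofinal subset M₀ ⊆ M with K_m ∈ 𝒦_{i₀} for all m ∈ M₀. In particular, each inclusion 𝒦_i ⊆ 𝒦 preserves κ-directed colimits. -/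
universe w v u u₂

open CategoryTheory CategoryTheory.Limits Cardinal Opposite

/-- A preordered set is `κ`-directed if every subset of cardinality `< κ`
has an upper bound. -/
def IsCardinalDirectedOrder (M : Type v) [Preorder M] (κ : Cardinal.{v}) : Prop :=
  ∀ S : Set M, #S < κ → ∃ m : M, ∀ s ∈ S, s ≤ m

/-- A bundled `κ`-directed poset. -/
structure CardinalDirectedPoset (κ : Cardinal.{v}) : Type (v + 1) where
  carrier : Type v
  [str : PartialOrder carrier]
  directed : IsCardinalDirectedOrder carrier κ

attribute [instance] CardinalDirectedPoset.str

/-- `C` has all colimits of `κ`-directed diagrams. -/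
def HasCardinalDirectedColimits (C : Type u) [Category.{v} C] (κ : Cardinal.{v}) : Prop :=
  ∀ M : CardinalDirectedPoset.{v} κ, HasColimitsOfShape M.carrier C

/-- `F` preserves all `κ`-directed colimits. -/
def PreservesCardinalDirectedColimits {C : Type u} [Category.{v} C]
    {D : Type u₂} [Category.{v} D] (F : C ⥤ D) (κ : Cardinal.{v}) : Prop :=
  ∀ M : CardinalDirectedPoset.{v} κ, Nonempty (PreservesColimitsOfShape M.carrier F)

/-- An object `X` is `κ`-presentable if `Hom(X, -)` preserves `κ`-directed colimits. -/
def IsCardinalPresentable {C : Type u} [Category.{v} C] (X : C) (κ : Cardinal.{v}) : Prop :=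
  PreservesCardinalDirectedColimits (coyoneda.obj (op X)) κ

/-- `C` is a `κ`-accessible category: `κ` is regular, `C` has `κ`-directed colimits,
and there is a set `S` of `κ`-presentable objects such that every object of `C`
is a `κ`-directed colimit of objects from `S`. -/
def IsCardinalAccessibleCategory (C : Type u) [Category.{v} C] (κ : Cardinal.{v}) : Prop :=
  κ.IsRegular ∧ HasCardinalDirectedColimits C κ ∧
    ∃ S : Set C, Small.{v} S ∧ (∀ X ∈ S, IsCardinalPresentable X κ) ∧
      ∀ X : C, ∃ (M : CardinalDirectedPoset.{v} κ) (D : M.carrier ⥤ C) (c : Cocone D),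
        Nonempty (IsColimit c) ∧ c.pt = X ∧ ∀ m : M.carrier, D.obj m ∈ S

/-- `C` is accessible if it is `κ`-accessible for some regular cardinal `κ`. -/
def IsAccessibleCategory (C : Type u) [Category.{v} C] : Prop :=
  ∃ κ : Cardinal.{v}, IsCardinalAccessibleCategory C κ

/-- `F` is a `κ`-accessible functor: both categories are `κ`-accessible and `F`
preserves `κ`-directed colimits. -/
def IsCardinalAccessibleFunctor {C : Type u} [Category.{v} C] {D : Type u₂} [Category.{v} D]
    (F : C ⥤ D) (κ : Cardinal.{v}) : Prop :=
  IsCardinalAccessibleCategory C κ ∧ IsCardinalAccessibleCategory D κ ∧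
    PreservesCardinalDirectedColimits F κ

/-- `F` is strongly `κ`-accessible: it is `κ`-accessible and preserves
`κ`-presentable objects. -/
def IsStronglyCardinalAccessibleFunctor {C : Type u} [Category.{v} C] {D : Type u₂}
    [Category.{v} D] (F : C ⥤ D) (κ : Cardinal.{v}) : Prop :=
  IsCardinalAccessibleFunctor F κ ∧
    ∀ X : C, IsCardinalPresentable X κ → IsCardinalPresentable (F.obj X) κ

/-- `F` is an accessible functor if it is `κ`-accessible for some regular cardinal `κ`. -/
def IsAccessibleFunctor {C : Type u} [Category.{v} C] {D : Type u₂} [Category.{v} D]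
    (F : C ⥤ D) : Prop :=
  ∃ κ : Cardinal.{v}, IsCardinalAccessibleFunctor F κ

section CatColimit

variable {I : Type v} [Preorder I] (K : I → Type u) [∀ i, Category.{v} (K i)]
  (F : ∀ i j, i ≤ j → (K i ⥤ K j))

/-- `(C, T)` is a colimit cocone in `CAT` over the diagram `(K, F)`: the cocone commutes
and every compatible cocone of functors factors uniquely through it. -/
def IsCatColimitCocone (C : Type u) [Category.{v} C] (T : ∀ i, K i ⥤ C) : Prop :=
  (∀ i j (h : i ≤ j), F i j h ⋙ T j = T i) ∧
    ∀ (L : Type u) [Category.{v} L] (G : ∀ i, K i ⥤ L),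
      (∀ i j (h : i ≤ j), F i j h ⋙ G j = G i) →
        ∃! H : C ⥤ L, ∀ i, T i ⋙ H = G i

end CatColimit

section Aux

theorem PR.cocone_eq {J : Type w} [Category.{v} J] {C : Type u} [Category.{v} C] {F : J ⥤ C}
    {c d : Cocone F} (h1 : c.pt = d.pt)
    (h2 : ∀ j, c.ι.app j = d.ι.app j ≫ eqToHom h1.symm) : c = d := by
  obtain ⟨cpt, cι⟩ := c; obtain ⟨dpt, dι⟩ := d
  obtain rfl : cpt = dpt := h1
  simp only [eqToHom_refl, Category.comp_id] at h2
  congr 1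
  ext j
  exact h2 j

/-- The key lemma: the image under the full inclusion of a colimit cocone in `K i`
is a colimit cocone in `C`. -/
noncomputable def PR.isColimitMap {C : Type u} [Category.{v} C]
    {I : Type v} [PartialOrder I] [IsDirected I (· ≤ ·)]
    (K : I → Set C) (hmono : ∀ i j, i ≤ j → K i ⊆ K j)
    (hcover : ∀ X : C, ∃ i, X ∈ K i)
    (κ : Cardinal.{v})
    (hincl : ∀ i j (h : i ≤ j),
      PreservesCardinalDirectedColimits
        (ObjectProperty.ιOfLE (fun _ hX => hmono i j h hX) :
          ObjectProperty.FullSubcategory (· ∈ K i) ⥤ ObjectProperty.FullSubcategory (· ∈ K j)) κ)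
    (i : I) (M : CardinalDirectedPoset.{v} κ)
    (G : M.carrier ⥤ ObjectProperty.FullSubcategory (· ∈ K i)) {t : Cocone G} (ht : IsColimit t) :
    IsColimit ((ObjectProperty.ι (· ∈ K i)).mapCocone t) := by
  apply IsColimit.ofExistsUnique
  intro s
  obtain ⟨j, hj⟩ := hcover s.pt
  obtain ⟨k, hik, hjk⟩ := directed_of (· ≤ ·) i j
  haveI := ((hincl i k hik) M).some
  have ht' := isColimitOfPreserves (ObjectProperty.ιOfLE (fun _ hX => hmono i k hik hX)) ht
  let s' : Cocone (G ⋙ ObjectProperty.ιOfLE (fun _ hX => hmono i k hik hX)) :=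
    { pt := ⟨s.pt, hmono j k hjk hj⟩
      ι := { app := fun m => ObjectProperty.homMk (s.ι.app m)
             naturality := fun m m' f => InducedCategory.hom_ext (s.ι.naturality f) } }
  obtain ⟨d, hd, hd'⟩ := ht'.existsUnique s'
  exact ⟨d.hom, fun m => congrArg (·.hom) (hd m),
    fun f hf => congrArg (·.hom) (hd' (ObjectProperty.homMk f) (fun m => InducedCategory.hom_ext (hf m)))⟩

end Aux

/-- Key step in the proof of Theorem 2.1 (Paré–Rosický): if `C` is the directed
union of full subcategories `K i`, `κ > |I|` is regular, each `K i` is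
`κ`-accessible and each inclusion `K i ⊆ K j` is strongly `κ`-accessible, then
every `κ`-directed diagram `D` in `C` has a colimit, which is computed as the
colimit in some `K i₀` of the restriction of `D` to a cofinal subset `M₀` whose
objects all lie in `K i₀`; in particular every inclusion `K i ⊆ C` preserves
`κ`-directed colimits. -/
theorem directed_union_has_cardinalDirected_colimits
    {C : Type u} [Category.{v} C]
    {I : Type v} [PartialOrder I] [IsDirected I (· ≤ ·)] [Nonempty I]
    (K : I → Set C) (hmono : ∀ i j, i ≤ j → K i ⊆ K j)
    (hcover : ∀ X : C, ∃ i, X ∈ K i)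
    (κ : Cardinal.{v}) (hκ : κ.IsRegular) (hI : #I < κ)
    (hacc : ∀ i, IsCardinalAccessibleCategory (ObjectProperty.FullSubcategory (· ∈ K i)) κ)
    (hincl : ∀ i j (h : i ≤ j),
      IsStronglyCardinalAccessibleFunctor
        (ObjectProperty.ιOfLE (fun _ hX => hmono i j h hX) :
          ObjectProperty.FullSubcategory (· ∈ K i) ⥤ ObjectProperty.FullSubcategory (· ∈ K j)) κ) :
    (∀ (M : CardinalDirectedPoset.{v} κ) (D : M.carrier ⥤ C),
      ∃ (i₀ : I) (M₀ : Set M.carrier),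
        (∀ m : M.carrier, ∃ p ∈ M₀, m ≤ p) ∧
        ∃ (hmem : ∀ m : M₀, D.obj m.1 ∈ K i₀)
          (c' : Cocone (ObjectProperty.lift (· ∈ K i₀)
            ((show Monotone (Subtype.val : M₀ → M.carrier) from fun _ _ h => h).functor ⋙ D)
            hmem))
          (_ : IsColimit c') (c : Cocone D) (_ : IsColimit c),
          (ObjectProperty.ι (· ∈ K i₀)).mapCocone c' =
            c.whisker
              (show Monotone (Subtype.val : M₀ → M.carrier) from fun _ _ h => h).functor) ∧
    ∀ i, PreservesCardinalDirectedColimits (ObjectProperty.ι (· ∈ K i)) κ := by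
  have part2 : ∀ i, PreservesCardinalDirectedColimits (ObjectProperty.ι (· ∈ K i)) κ := by
    intro i M
    refine ⟨⟨fun {G} => ⟨fun {t} ht => ⟨?_⟩⟩⟩⟩
    exact PR.isColimitMap K hmono hcover κ (fun i j h => (hincl i j h).1.2.2) i M G ht
  refine ⟨?_, part2⟩
  intro M D
  -- M is a directed nonempty preorder
  haveI hMdir : IsDirected M.carrier (· ≤ ·) := by
    constructor
    intro a b
    obtain ⟨m, hm⟩ := M.directed {a, b}
      (((Set.finite_singleton b).insert a).lt_aleph0.trans_le hκ.aleph0_le)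
    exact ⟨m, hm a (by simp), hm b (by simp)⟩
  haveI hMne : Nonempty M.carrier := by
    obtain ⟨m, -⟩ := M.directed ∅ (by
      simpa using lt_of_lt_of_le aleph0_pos hκ.aleph0_le)
    exact ⟨m⟩
  -- find i₀ such that M₀ is cofinal
  have hcof : ∃ i₀ : I, ∀ m : M.carrier, ∃ p, D.obj p ∈ K i₀ ∧ m ≤ p := by
    by_contra h
    push_neg at h
    choose f hf using h
    obtain ⟨m, hm⟩ := M.directed (Set.range f) (lt_of_le_of_lt Cardinal.mk_range_le hI)
    obtain ⟨i, hi⟩ := hcover (D.obj m)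
    exact hf i m hi (hm (f i) (Set.mem_range_self i))
  obtain ⟨i₀, hcof⟩ := hcof
  set M₀ : Set M.carrier := {m | D.obj m ∈ K i₀} with hM₀def
  have hM₀ : ∀ m : M.carrier, ∃ p ∈ M₀, m ≤ p := fun m => hcof m
  have hmem : ∀ m : M₀, D.obj m.1 ∈ K i₀ := fun m => m.2
  -- M₀ is κ-directed
  have hM₀dir : IsCardinalDirectedOrder (↥M₀) κ := by
    intro S hS
    obtain ⟨m, hm⟩ := M.directed (Subtype.val '' S) (lt_of_le_of_lt Cardinal.mk_image_le hS)
    obtain ⟨p, hp, hmp⟩ := hM₀ m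
    exact ⟨⟨p, hp⟩, fun s hs => show (s : M.carrier) ≤ p from le_trans (hm s.1 ⟨s, hs, rfl⟩) hmp⟩
  let M₀P : CardinalDirectedPoset.{v} κ := ⟨↥M₀, hM₀dir⟩
  -- the monotone inclusion functor and the lifted diagram
  let Fm : ↥M₀ ⥤ M.carrier :=
    (show Monotone (Subtype.val : M₀ → M.carrier) from fun _ _ h => h).functor
  let DL : ↥M₀ ⥤ ObjectProperty.FullSubcategory (· ∈ K i₀) := ObjectProperty.lift (· ∈ K i₀) (Fm ⋙ D) hmem
  haveI : HasColimitsOfShape (↥M₀) (ObjectProperty.FullSubcategory (· ∈ K i₀)) := (hacc i₀).2.1 M₀P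
  let c' := colimit.cocone DL
  have hc' : IsColimit c' := colimit.isColimit DL
  have hmap : IsColimit ((ObjectProperty.ι (· ∈ K i₀)).mapCocone c') :=
    PR.isColimitMap K hmono hcover κ (fun i j h => (hincl i j h).1.2.2) i₀ M₀P DL hc'
  -- the mapped cocone, as a cocone over Fm ⋙ D
  let mc : Cocone (Fm ⋙ D) := (ObjectProperty.ι (· ∈ K i₀)).mapCocone c'
  have compat : ∀ (m m' : ↥M₀) (h : (m : M.carrier) ≤ m'),
      D.map (homOfLE h) ≫ mc.ι.app m' = mc.ι.app m := by
    intro m m' h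
    have hw := mc.w (homOfLE (show m ≤ m' from h))
    have : (Fm ⋙ D).map (homOfLE (show m ≤ m' from h)) = D.map (homOfLE h) := by
      show D.map _ = D.map _
      exact congrArg D.map (Subsingleton.elim _ _)
    rw [this] at hw
    exact hw
  choose pk hpk1 hpk2 using fun m => hM₀ m
  have indep : ∀ (m : M.carrier) (p p' : ↥M₀) (h : m ≤ p.1) (h' : m ≤ p'.1),
      D.map (homOfLE h) ≫ mc.ι.app p = D.map (homOfLE h') ≫ mc.ι.app p' := by
    intro m p p' h h'
    obtain ⟨r, hr1, hr2⟩ := directed_of (· ≤ ·) p.1 p'.1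
    have hq : pk r ∈ M₀ := hpk1 r
    erw [← compat p ⟨pk r, hq⟩ (le_trans hr1 (hpk2 r)),
        ← compat p' ⟨pk r, hq⟩ (le_trans hr2 (hpk2 r)),
        ← Category.assoc, ← Category.assoc, ← D.map_comp, ← D.map_comp]
    exact congrArg (· ≫ mc.ι.app ⟨pk r, hq⟩) (congrArg D.map (Subsingleton.elim _ _))
  -- extend mc to a cocone over D
  let c : Cocone D :=
    { pt := mc.pt
      ι :=
        { app := fun m => D.map (homOfLE (hpk2 m)) ≫ mc.ι.app ⟨pk m, hpk1 m⟩
          naturality := by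
            intro m m' f
            dsimp
            erw [Category.comp_id, ← Category.assoc, ← D.map_comp]
            have : f ≫ homOfLE (hpk2 m') = homOfLE (le_trans (leOfHom f) (hpk2 m')) :=
              Subsingleton.elim _ _
            rw [this]
            exact indep m ⟨pk m', hpk1 m'⟩ ⟨pk m, hpk1 m⟩ _ _ } }
  -- the whiskering of c along Fm agrees with mc
  have happ : ∀ m : ↥M₀, mc.ι.app m = (c.whisker Fm).ι.app m := by
    intro m
    have h0 : D.map (homOfLE (le_refl m.1)) ≫ mc.ι.app m = mc.ι.app m := by
      have : homOfLE (le_refl m.1) = 𝟙 (m.1 : M.carrier) := rfl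
      erw [this, D.map_id, Category.id_comp]
    exact h0.symm.trans (indep m.1 m ⟨pk m.1, hpk1 m.1⟩ (le_refl m.1) (hpk2 m.1))
  have hwhisk : (ObjectProperty.ι (· ∈ K i₀)).mapCocone c' = c.whisker Fm := by
    refine PR.cocone_eq rfl ?_
    intro m
    exact (happ m).trans (Category.comp_id _).symm
  -- finality of Fm
  haveI : Fm.Full := ⟨fun {a b} f => ⟨homOfLE (Subtype.coe_le_coe.mp (leOfHom f)), rfl⟩⟩
  haveI : Fm.Faithful := ⟨fun {a b} {f g} _ => Subsingleton.elim _ _⟩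
  haveI hfin : Fm.Final := by
    apply Functor.final_of_exists_of_isFiltered_of_fullyFaithful
    intro m
    obtain ⟨p, hp, hmp⟩ := hM₀ m
    exact ⟨⟨p, hp⟩, ⟨homOfLE hmp⟩⟩
  have hcolim : IsColimit c :=
    (Functor.Final.isColimitWhiskerEquiv Fm c) (hwhisk ▸ hmap)
  exact ⟨i₀, M₀, hM₀, hmem, c', hc', c, hcolim, hwhisk⟩
end

section
/- Let I be a directed poset, (𝒦_i)_{i∈I} a directed family of full subcategories of a category 𝒦 with 𝒦 = ⋃_{i∈I} 𝒦_i, and κ a regular cardinal with κ > |I| such that each 𝒦_i is κ-accessible and each inclusion 𝒦_i ⊆ 𝒦_j (i ≤ j) is strongly κ-accessible. If an object K is κ-presentable in some 𝒦_i, then K is κ-presentable in 𝒦. -/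
universe w v u u₂

open CategoryTheory CategoryTheory.Limits Cardinal Opposite

theorem isDirected_of_cardinalDirected {M : Type v} [Preorder M] {κ : Cardinal.{v}}
    (hκ : κ.IsRegular) (h : IsCardinalDirectedOrder M κ) : IsDirected M (· ≤ ·) := by
  constructor
  intro a b
  obtain ⟨m, hm⟩ := h {a, b} ((Set.toFinite _).lt_aleph0.trans_le hκ.aleph0_le)
  exact ⟨m, hm a (by simp), hm b (by simp)⟩

theorem nonempty_of_cardinalDirected {M : Type v} [Preorder M] {κ : Cardinal.{v}}
    (hκ : κ.IsRegular) (h : IsCardinalDirectedOrder M κ) : Nonempty M := by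
  obtain ⟨m, -⟩ := h ∅ (by simpa using aleph0_pos.trans_le hκ.aleph0_le)
  exact ⟨m⟩

/-- Key step in the proof of Theorem 2.1 (Paré–Rosický): if `C` is the directed
union of full subcategories `K i`, `κ > |I|` is regular, each `K i` is
`κ`-accessible and each inclusion `K i ⊆ K j` is strongly `κ`-accessible, then
any object that is `κ`-presentable in some `K i` is `κ`-presentable in `C`. -/
theorem presentable_of_presentable_in_piece
    {C : Type u} [Category.{v} C]
    {I : Type v} [PartialOrder I] [IsDirected I (· ≤ ·)] [Nonempty I]
    (K : I → Set C) (hmono : ∀ i j, i ≤ j → K i ⊆ K j)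
    (hcover : ∀ X : C, ∃ i, X ∈ K i)
    (κ : Cardinal.{v}) (hκ : κ.IsRegular) (hI : #I < κ)
    (hacc : ∀ i, IsCardinalAccessibleCategory (ObjectProperty.FullSubcategory (· ∈ K i)) κ)
    (hincl : ∀ i j (h : i ≤ j),
      IsStronglyCardinalAccessibleFunctor
        (ObjectProperty.ιOfLE (fun _ hX => hmono i j h hX) :
          ObjectProperty.FullSubcategory (· ∈ K i) ⥤ ObjectProperty.FullSubcategory (· ∈ K j)) κ)
    (i : I) (X : C) (hX : X ∈ K i)
    (hpres : IsCardinalPresentable (⟨X, hX⟩ : ObjectProperty.FullSubcategory (· ∈ K i)) κ) :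
    IsCardinalPresentable X κ := by
  intro M
  refine ⟨⟨fun {D} => ⟨fun {c} hc => ?_⟩⟩⟩
  -- find an index over which a cofinal part of the diagram lives
  obtain ⟨j₀, hj₀⟩ := hcover c.pt
  have hcofj : ∃ j : I, ∀ m : M.carrier, ∃ m', m ≤ m' ∧ D.obj m' ∈ K j := by
    by_contra h
    push_neg at h
    choose f hf using h
    obtain ⟨m, hm⟩ := M.directed (Set.range f) (Cardinal.mk_range_le.trans_lt hI)
    obtain ⟨j, hj⟩ := hcover (D.obj m)
    exact hf j m (hm _ ⟨j, rfl⟩) hj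
  obtain ⟨jc, hjc⟩ := hcofj
  obtain ⟨j₁, h1, h2⟩ := directed_of (· ≤ ·) jc i
  obtain ⟨j, h3, h4⟩ := directed_of (· ≤ ·) j₁ j₀
  have hij : i ≤ j := h2.trans h3
  have hcof : ∀ m : M.carrier, ∃ m', m ≤ m' ∧ D.obj m' ∈ K j := fun m => by
    obtain ⟨m', hm', hK⟩ := hjc m
    exact ⟨m', hm', hmono _ _ (h1.trans h3) hK⟩
  -- the cofinal κ-directed sub-poset
  set P : Type v := {m : M.carrier // D.obj m ∈ K j} with hPdef
  have hdir : IsCardinalDirectedOrder P κ := by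
    intro S hS
    obtain ⟨m, hm⟩ := M.directed (Subtype.val '' S)
      (lt_of_le_of_lt Cardinal.mk_image_le hS)
    obtain ⟨m', hmm', hQ⟩ := hcof m
    exact ⟨⟨m', hQ⟩, fun s hs => show (s : M.carrier) ≤ m' from
      (hm s.1 ⟨s, hs, rfl⟩).trans hmm'⟩
  have hP : Nonempty P := nonempty_of_cardinalDirected hκ hdir
  have hPd : IsDirected P (· ≤ ·) := isDirected_of_cardinalDirected hκ hdir
  have hMd : IsDirected M.carrier (· ≤ ·) := isDirected_of_cardinalDirected hκ M.directed
  have hmon : Monotone (Subtype.val : P → M.carrier) := fun _ _ h => h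
  let ι : P ⥤ M.carrier := hmon.functor
  have : ι.Full := ⟨fun f => ⟨homOfLE (leOfHom f), rfl⟩⟩
  have : ι.Faithful := ⟨fun {_ _} _ _ _ => Subsingleton.elim _ _⟩
  have hfin : ι.Final := by
    apply Functor.final_of_exists_of_isFiltered_of_fullyFaithful
    intro m
    obtain ⟨m', hm1, hm2⟩ := hcof m
    exact ⟨⟨m', hm2⟩, ⟨homOfLE hm1⟩⟩
  let MP : CardinalDirectedPoset.{v} κ := ⟨P, hdir⟩
  -- X is κ-presentable in K j
  have hXj : X ∈ K j := hmono i j hij hX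
  have hpresj : IsCardinalPresentable (⟨X, hXj⟩ : ObjectProperty.FullSubcategory (· ∈ K j)) κ :=
    (hincl i j hij).2 ⟨X, hX⟩ hpres
  -- restricted diagram and cocone in K j
  let E : P ⥤ ObjectProperty.FullSubcategory (· ∈ K j) :=
    ObjectProperty.lift _ (ι ⋙ D) (fun p => p.2)
  let c' : Cocone E :=
    { pt := ⟨c.pt, hmono j₀ j h4 hj₀⟩
      ι := { app := fun p => InducedCategory.homMk (c.ι.app p.1)
             naturality := fun p q f => by
               ext
               have := c.w (ι.map f)
               exact this.trans (Category.comp_id _).symm } }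
  have hc' : IsColimit (c.whisker ι) := (Functor.Final.isColimitWhiskerEquiv ι c).symm hc
  have hcc : IsColimit c' :=
    isColimitOfReflects (ObjectProperty.ι (· ∈ K j))
      (show IsColimit ((ObjectProperty.ι (· ∈ K j)).mapCocone c') from hc')
  haveI hval : PreservesColimitsOfShape MP.carrier
      (coyoneda.obj (op (⟨X, hXj⟩ : ObjectProperty.FullSubcategory (· ∈ K j)))) := (hpresj MP).some
  haveI hval2 : PreservesColimitsOfShape MP.carrier
      (ObjectProperty.ι (· ∈ K j) ⋙ coyoneda.obj (op X)) :=
    preservesColimitsOfShape_of_natIso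
      (NatIso.ofComponents (F := coyoneda.obj (op (⟨X, hXj⟩ : ObjectProperty.FullSubcategory (· ∈ K j))))
        (fun Y => Equiv.toIso
          { toFun := fun g => g.hom, invFun := fun g => InducedCategory.homMk g,
            left_inv := fun _ => rfl, right_inv := fun _ => rfl }) (by intros; rfl))
  have h5 : IsColimit
      ((ObjectProperty.ι (· ∈ K j) ⋙ coyoneda.obj (op X)).mapCocone c') :=
    isColimitOfPreserves _ hcc
  exact ⟨(Functor.Final.isColimitWhiskerEquiv ι _).1 h5⟩
end

section
/- Let 𝒞 be the category whose objects are infinite sequences of sets and functions A₁ → A₂ → A₃ → ⋯ which are eventually constant, i.e. there is an N such that the map A_n → A_{n+1} is an identity for all n ≥ N, and whose morphisms are levelwise natural families of functions. Then 𝒞 is not ℵ₀-accessible (not finitely accessible). -/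
universe w v u u₂

open CategoryTheory CategoryTheory.Limits Cardinal Opposite

/-- An eventually constant sequence of sets: a sequence of sets and functions
`A 0 → A 1 → A 2 → ⋯` such that from some index on, each map `A n → A (n+1)`
is an identity. -/
structure EventuallyConstantSequence : Type (u + 1) where
  X : ℕ → Type u
  f : ∀ n, X n → X (n + 1)
  eventually_id : ∃ N : ℕ, ∀ n, N ≤ n → HEq (f n) (fun a : X n => a)

/-- Morphisms of eventually constant sequences: levelwise natural families of
functions. -/
@[ext]
structure EventuallyConstantSequence.Hom (A B : EventuallyConstantSequence.{u}) :
    Type u where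
  app : ∀ n, A.X n → B.X n
  naturality : ∀ n a, app (n + 1) (A.f n a) = B.f n (app n a)

instance : Category.{u} EventuallyConstantSequence.{u} where
  Hom := EventuallyConstantSequence.Hom
  id A := ⟨fun _ a => a, fun _ _ => rfl⟩
  comp φ ψ := ⟨fun n a => ψ.app n (φ.app n a),
    fun n a => by beta_reduce; rw [φ.naturality, ψ.naturality]⟩
  id_comp _ := rfl
  comp_id _ := rfl
  assoc _ _ _ := rfl

namespace PareRosicky

open EventuallyConstantSequence

lemma heq_subtype {p q : ℕ → Prop} (hpq : p = q)
    (f : ULift.{u} (Subtype p) → ULift.{u} (Subtype q))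
    (hf : ∀ a, (f a).down.1 = a.down.1) :
    HEq f (fun a : ULift.{u} (Subtype p) => a) := by
  subst hpq
  have hfe : f = fun a => a := by
    funext a
    have h2 : (f a).down = a.down := Subtype.ext (hf a)
    calc f a = ULift.up (f a).down := rfl
      _ = ULift.up a.down := by rw [h2]
      _ = a := rfl
  rw [hfe]

lemma heq_propfun {A : Type u} {p q : Prop} (hp : ¬ p) (hq : ¬ q)
    (f : (p → A) → (q → A)) : HEq f (fun g : p → A => g) := by
  obtain rfl : p = q := propext (iff_of_false hp hq)
  have hfe : f = fun g => g := by
    funext g x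
    exact absurd x hp
  rw [hfe]

/-- The object of the growing diagram: levels `{0,…,min n k}`. -/
def Dobj (k : ℕ) : EventuallyConstantSequence.{u} where
  X n := ULift.{u} {x : ℕ // x ≤ min n k}
  f n a := ⟨⟨a.down.1, by have := a.down.2; omega⟩⟩
  eventually_id := by
    refine ⟨k, fun n hn => ?_⟩
    refine heq_subtype ?_ _ (fun a => rfl)
    funext x
    exact propext (by constructor <;> (intro h; omega))

/-- Test object: `Bool` at levels `< j`, a point afterwards. -/
def Bobj (j : ℕ) : EventuallyConstantSequence.{u} where
  X i := i < j → ULift.{u} Bool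
  f i g := fun h => g (by omega)
  eventually_id := by
    refine ⟨j, fun n hn => ?_⟩
    exact heq_propfun (by omega) (by omega) _

/-- A `Type u` copy of ℕ. -/
structure UNat : Type u where
  val : ℕ

instance : PartialOrder UNat.{u} :=
  PartialOrder.lift UNat.val (fun a b h => by cases a; cases b; simpa using h)

lemma unat_directed : IsCardinalDirectedOrder UNat.{u} Cardinal.aleph0 := by
  intro S hS
  have hfin : S.Finite := Cardinal.lt_aleph0_iff_set_finite.mp hS
  obtain ⟨b, hb⟩ := (hfin.image UNat.val).bddAbove
  exact ⟨⟨b⟩, fun s hs => hb (Set.mem_image_of_mem _ hs)⟩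

def Dmap {k k' : ℕ} (h : k ≤ k') : Dobj.{u} k ⟶ Dobj.{u} k' where
  app n a := ⟨⟨a.down.1, by have := a.down.2; omega⟩⟩
  naturality n a := rfl

def Dfunctor : UNat.{u} ⥤ EventuallyConstantSequence.{u} where
  obj k := Dobj k.val
  map {k k'} φ := Dmap (by have h2 : k ≤ k' := leOfHom φ; exact h2)
  map_id k := rfl
  map_comp φ ψ := rfl

/-- Pushing an element up the chain. -/
def push (A : EventuallyConstantSequence.{u}) : ∀ (i n : ℕ), i ≤ n → A.X i → A.X n
  | _, 0, h, a => (Nat.le_zero.mp h) ▸ a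
  | i, n+1, h, a =>
    if h' : i ≤ n then A.f n (push A i n h' a)
    else (Nat.le_antisymm h (Nat.not_le.mp h')) ▸ a

lemma push_self (A : EventuallyConstantSequence.{u}) (i : ℕ) (h : i ≤ i) (a : A.X i) :
    push A i i h a = a := by
  cases i with
  | zero => rfl
  | succ n =>
    show (if h' : n+1 ≤ n then _ else _) = a
    rw [dif_neg (by omega)]

lemma push_succ (A : EventuallyConstantSequence.{u}) (i n : ℕ) (h : i ≤ n) (h2 : i ≤ n+1)
    (a : A.X i) : push A i (n+1) h2 a = A.f n (push A i n h a) := by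
  show (if h' : i ≤ n then _ else _) = _
  rw [dif_pos h]

lemma push_shift (A : EventuallyConstantSequence.{u}) (i : ℕ) :
    ∀ (n : ℕ) (h : i+1 ≤ n) (h2 : i ≤ n) (a : A.X i),
    push A (i+1) n h (A.f i a) = push A i n h2 a := by
  intro n
  induction n with
  | zero => intro h _ _; exact absurd h (by omega)
  | succ n ih =>
    intro h h2 a
    by_cases hc : i + 1 ≤ n
    · rw [push_succ A (i+1) n hc h, push_succ A i n (by omega) h2, ih hc (by omega)]
    · have hin : i = n := by omega
      subst hin
      rw [push_self, push_succ A i i le_rfl h2, push_self]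

lemma hom_push {Cq : EventuallyConstantSequence.{u}} {j : ℕ} (h : Cq ⟶ Bobj.{u} j)
    (i : ℕ) (hij : i < j) : ∀ (n : ℕ) (hin : i ≤ n) (cx : Cq.X i) (hlt : n < j),
    h.app n (push Cq i n hin cx) hlt = h.app i cx hij := by
  intro n
  induction n with
  | zero =>
    intro hin cx hlt
    have h0 : i = 0 := by omega
    subst h0
    rw [push_self]
  | succ n ih =>
    intro hin cx hlt
    by_cases hc : i ≤ n
    · rw [push_succ Cq i n hc hin, h.naturality n (push Cq i n hc cx)]
      exact ih hc cx (by omega)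
    · have h0 : i = n+1 := by omega
      subst h0
      rw [push_self]

end PareRosicky

namespace PareRosicky

open CategoryTheory CategoryTheory.Limits EventuallyConstantSequence

section ColimitFacts

variable (c : Cocone Dfunctor.{u})

/-- The components of the colimit cocone. -/
def uapp (k : ℕ) : Dobj.{u} k ⟶ c.pt := c.ι.app ⟨k⟩

/-- The diagonal elements of the colimit vertex. -/
def delta (a : ℕ) : c.pt.X a := (uapp c a).app a ⟨⟨a, by omega⟩⟩

lemma u_mono {k k' : ℕ} (hk : k ≤ k') (n : ℕ) (x : ULift.{u} {t : ℕ // t ≤ min n k})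
    (h2 : x.down.1 ≤ min n k') :
    (uapp c k).app n x = (uapp c k').app n ⟨⟨x.down.1, h2⟩⟩ := by
  have h3 : Dmap.{u} hk ≫ uapp c k' = uapp c k := by
    have hn := c.ι.naturality (homOfLE (show (⟨k⟩ : UNat.{u}) ≤ ⟨k'⟩ from hk))
    simp only [Functor.const_obj_map, Category.comp_id] at hn
    exact hn
  conv_lhs => rw [← h3]
  rfl

lemma u_diag (a : ℕ) : ∀ (n : ℕ), ∀ (k : ℕ) (han : a ≤ n) (hak : a ≤ k) (pf : a ≤ min n k),
    (uapp c k).app n ⟨⟨a, pf⟩⟩ = push c.pt a n han (delta c a) := by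
  intro n
  induction n with
  | zero =>
    intro k han hak pf
    have h0 : a = 0 := by omega
    subst h0
    rw [push_self]
    exact (u_mono c (Nat.zero_le k) 0 ⟨⟨0, by omega⟩⟩ pf).symm
  | succ n ih =>
    intro k han hak pf
    by_cases hc2 : a ≤ n
    · rw [push_succ c.pt a n hc2 han]
      rw [show (uapp c k).app (n+1) ⟨⟨a, pf⟩⟩
            = c.pt.f n ((uapp c k).app n ⟨⟨a, by omega⟩⟩) from
          (uapp c k).naturality n ⟨⟨a, by omega⟩⟩]
      rw [ih k hc2 hak (by omega)]
    · have h0 : a = n+1 := by omega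
      subst h0
      rw [push_self]
      exact (u_mono c hak (n+1) ⟨⟨n+1, by omega⟩⟩ pf).symm

lemma hom_determined (hc : IsColimit c) {j : ℕ} (h h' : c.pt ⟶ Bobj.{u} j)
    (htr : ∀ (a : ℕ) (ha : a < j), h.app a (delta c a) = h'.app a (delta c a)) : h = h' := by
  apply hc.hom_ext
  intro kU
  apply EventuallyConstantSequence.Hom.ext
  funext n x
  obtain ⟨⟨a, ha⟩⟩ := x
  have h1 : a ≤ n := by omega
  have h2 : a ≤ kU.val := by omega
  show h.app n ((uapp c kU.val).app n ⟨⟨a, ha⟩⟩)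
      = h'.app n ((uapp c kU.val).app n ⟨⟨a, ha⟩⟩)
  rw [u_diag c a n kU.val h1 h2 ha]
  funext hlt
  have haj : a < j := by omega
  rw [hom_push h a haj n h1 (delta c a) hlt, hom_push h' a haj n h1 (delta c a) hlt]
  rw [htr a haj]

lemma finite_hom (hc : IsColimit c) (j : ℕ) : Finite (c.pt ⟶ Bobj.{u} j) := by
  have hinj : Function.Injective
      (fun (h : c.pt ⟶ Bobj.{u} j) (i : Fin j) => h.app i.1 (delta c i.1) i.2) := by
    intro h h' he
    apply hom_determined c hc
    intro a ha
    funext hlt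
    exact congrFun he ⟨a, ha⟩
  exact Finite.of_injective _ hinj

/-- Mapping functions on level `m` to morphisms into `Bobj (m+1)`. -/
def psi (m : ℕ) (φ : c.pt.X m → ULift.{u} Bool) : c.pt ⟶ Bobj.{u} (m+1) where
  app i ci := fun hlt => φ (push c.pt i m (Nat.lt_succ_iff.mp hlt) ci)
  naturality := by
    intro n a
    funext hlt
    exact congrArg φ (push_shift c.pt n m (by omega) (by omega) a)

lemma psi_inj (m : ℕ) : Function.Injective (psi c m) := by
  intro φ φ' he
  funext ci
  have h2 := congrArg
    (fun (h : c.pt ⟶ Bobj.{u} (m+1)) => h.app m ci (Nat.lt_succ_self m)) he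
  simp only [psi] at h2
  rw [push_self] at h2
  exact h2

lemma finite_level (hc : IsColimit c) (m : ℕ) : Finite (c.pt.X m) := by
  haveI : Finite (c.pt ⟶ Bobj.{u} (m+1)) := finite_hom c hc (m+1)
  haveI : Finite (c.pt.X m → ULift.{u} Bool) := Finite.of_injective _ (psi_inj c m)
  letI := Classical.decEq (c.pt.X m)
  apply Finite.of_injective
    (fun (x : c.pt.X m) => (fun y => ULift.up.{u} (decide (y = x)) : c.pt.X m → ULift.{u} Bool))
  intro x x' he
  have h1 : (decide (x = x) : Bool) = decide (x = x') :=
    congrArg ULift.down (congrFun he x)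
  rw [decide_eq_true rfl] at h1
  exact of_decide_eq_true h1.symm

/-- The separating cocone given by a boolean sequence. -/
def testCocone (j : ℕ) (d : ℕ → ULift.{u} Bool) : Cocone Dfunctor.{u} where
  pt := Bobj.{u} j
  ι :=
    { app := fun _ =>
        { app := fun _ x _ => d x.down.1
          naturality := fun _ _ => rfl }
      naturality := fun _ _ _ => rfl }

lemma u_inj (hc : IsColimit c) (m : ℕ) {a b : ℕ} (ha : a ≤ min m m) (hb : b ≤ min m m)
    (he : (uapp c m).app m ⟨⟨a, ha⟩⟩ = (uapp c m).app m ⟨⟨b, hb⟩⟩) : a = b := by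
  classical
  set d : ℕ → ULift.{u} Bool := fun t => ULift.up (decide (t = a)) with hd
  have hfac := hc.fac (testCocone (m+1) d) ⟨m⟩
  have h1 : (hc.desc (testCocone (m+1) d)).app m ((uapp c m).app m ⟨⟨a, ha⟩⟩)
      (Nat.lt_succ_self m) = d a :=
    congrArg (fun (ψ : Dobj.{u} m ⟶ Bobj.{u} (m+1)) =>
      ψ.app m ⟨⟨a, ha⟩⟩ (Nat.lt_succ_self m)) hfac
  have h2 : (hc.desc (testCocone (m+1) d)).app m ((uapp c m).app m ⟨⟨b, hb⟩⟩)
      (Nat.lt_succ_self m) = d b :=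
    congrArg (fun (ψ : Dobj.{u} m ⟶ Bobj.{u} (m+1)) =>
      ψ.app m ⟨⟨b, hb⟩⟩ (Nat.lt_succ_self m)) hfac
  rw [he] at h1
  have h3 : d a = d b := by rw [← h1, ← h2]
  have h4 : (decide (a = a) : Bool) = decide (b = a) := congrArg ULift.down h3
  rw [decide_eq_true rfl] at h4
  exact (of_decide_eq_true h4.symm).symm

lemma level_card (hc : IsColimit c) (m : ℕ) : m + 1 ≤ Nat.card (c.pt.X m) := by
  haveI := finite_level c hc m
  have hinj : Function.Injective
      (fun (i : Fin (m+1)) => (uapp c m).app m ⟨⟨i.1, by have := i.2; omega⟩⟩) := by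
    intro i i' he
    exact Fin.ext (u_inj c hc m _ _ he)
  calc m + 1 = Nat.card (Fin (m+1)) := by simp
    _ ≤ Nat.card (c.pt.X m) := Nat.card_le_card_of_injective _ hinj

end ColimitFacts

end PareRosicky

/-- **Example 2.2 (Paré–Rosický), negative part.** The category of eventually
constant sequences of sets is not finitely (`ℵ₀`-)accessible. -/
theorem eventuallyConstantSequence_not_aleph0_accessible :
    ¬ IsCardinalAccessibleCategory EventuallyConstantSequence.{u} Cardinal.aleph0 := by
  rintro ⟨-, hdir, -⟩
  haveI hshape : HasColimitsOfShape PareRosicky.UNat.{u} EventuallyConstantSequence.{u} :=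
    hdir { carrier := PareRosicky.UNat.{u}, directed := PareRosicky.unat_directed }
  obtain ⟨c, ⟨hc⟩⟩ : ∃ c : Cocone PareRosicky.Dfunctor.{u}, Nonempty (IsColimit c) :=
    ⟨colimit.cocone _, ⟨colimit.isColimit _⟩⟩
  obtain ⟨N, hN⟩ := c.pt.eventually_id
  have hstep : ∀ n, N ≤ n → Nat.card (c.pt.X (n+1)) = Nat.card (c.pt.X n) := by
    intro n hn
    haveI := PareRosicky.finite_level c hc n
    haveI := PareRosicky.finite_level c hc (n+1)
    have hty : (c.pt.X n → c.pt.X (n+1)) = (c.pt.X n → c.pt.X n) :=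
      type_eq_of_heq (hN n hn)
    have hcard : Nat.card (c.pt.X n → c.pt.X (n+1)) = Nat.card (c.pt.X n → c.pt.X n) := by
      rw [hty]
    rw [Nat.card_fun, Nat.card_fun] at hcard
    have hpos : Nat.card (c.pt.X n) ≠ 0 := by
      have := PareRosicky.level_card c hc n
      omega
    exact Nat.pow_left_injective hpos hcard
  have hconst : ∀ d : ℕ, Nat.card (c.pt.X (N+d)) = Nat.card (c.pt.X N) := by
    intro d
    induction d with
    | zero => rfl
    | succ d ih =>
      rw [show N + (d+1) = (N+d)+1 from rfl, hstep (N+d) (by omega), ih]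
  have h1 := PareRosicky.level_card c hc (N + Nat.card (c.pt.X N))
  rw [hconst] at h1
  omega
end
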